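/- arXiv:2007.03730 — 3 statements merged into one kernel-verified Lean document; each statement's English description precedes it below -/
import Mathlib

section
/- Let f : ℝ^d → ℝ be measurable and let t ∈ ℝ be such that 0 < P[f(x+G) ≤ t] < 1 for every x ∈ ℝ^d. Then the map x ↦ σ·Φ⁻¹(P[f(x+G) ≤ t]) is 1-Lipschitz with respect to the Euclidean norm, i.e. |σ·Φ⁻¹(P[f(x+G) ≤ t]) − σ·Φ⁻¹(P[f(x′+G) ≤ t])| ≤ ‖x − x′‖₂ for all x, x′ ∈ ℝ^d. -/
/-!
For the standard Gaussian `γ`, the shifted measure `γ(· + h)` has density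
`exp (⟪h, v⟫ - ‖h‖² / 2)` with respect to `γ` (Cameron–Martin), an increasing function of
`⟪h, v⟫`. By the Neyman–Pearson argument, among all sets of `γ`-measure `Φ a` the half-space
`{v | ⟪h / ‖h‖, v⟫ ≤ a}` has the smallest shifted measure, and that measure is `Φ (a - ‖h‖)`.
Hence `Φ⁻¹ (γ (A - h)) ≥ Φ⁻¹ (γ A) - ‖h‖`; rescaling by `σ` and exchanging the roles of
`x` and `x'` gives the Lipschitz bound.
-/

open MeasureTheory ProbabilityTheory

/-- CDF of the standard one-dimensional Gaussian `N(0,1)`. -/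
noncomputable def Phi (t : ℝ) : ℝ := ((gaussianReal 0 1) (Set.Iic t)).toReal

/-- Inverse of the standard Gaussian CDF (a genuine inverse on `(0,1)`). -/
noncomputable def PhiInv : ℝ → ℝ := Function.invFun Phi

/-- The Gaussian measure `N(0, σ²I)` on `ℝ^d`, i.e. the `d`-fold product of the
one-dimensional centered Gaussian of variance `σ²`, carried to Euclidean space. -/
noncomputable def gaussPi (d : ℕ) (σ : ℝ) : Measure (EuclideanSpace ℝ (Fin d)) :=
  Measure.map (MeasurableEquiv.toLp 2 (Fin d → ℝ))
    (Measure.pi fun _ : Fin d => gaussianReal 0 (σ.toNNReal ^ 2))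

open Real Set Function
open scoped ENNReal NNReal RealInnerProductSpace

namespace MeasureTheory

lemma Measure.pi_withDensity {ι : Type*} [Fintype ι] {X : ι → Type*}
    [∀ i, MeasurableSpace (X i)] (μ : ∀ i, Measure (X i)) [∀ i, IsProbabilityMeasure (μ i)]
    {g : ∀ i, X i → ℝ≥0∞} (hg : ∀ i, Measurable (g i))
    [∀ i, SigmaFinite ((μ i).withDensity (g i))] :
    Measure.pi (fun i => (μ i).withDensity (g i)) =
      (Measure.pi μ).withDensity (fun x => ∏ i, g i (x i)) := by
  refine Measure.pi_eq fun s hs => ?_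
  have hind : (univ.pi s).indicator (fun x => ∏ i, g i (x i)) =
      fun x => ∏ i, (s i).indicator (g i) (x i) := by
    classical
    ext x
    simp only [indicator_apply, Finset.prod_ite_zero, mem_univ_pi, Finset.mem_univ, true_implies]
  rw [withDensity_apply _ (.univ_pi hs), ← lintegral_indicator (.univ_pi hs), hind,
    lintegral_prod_eq_prod_lintegral_of_indepFun _ _
      (iIndepFun_pi fun i => ((hg i).indicator (hs i)).aemeasurable)
      fun i => ((hg i).indicator (hs i)).comp (measurable_pi_apply i)]
  refine Finset.prod_congr rfl fun i _ => ?_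
  rw [withDensity_apply _ (hs i), ← lintegral_indicator (hs i),
    (measurePreserving_eval μ i).lintegral_comp ((hg i).indicator (hs i))]

lemma setLIntegral_preimage_Iic_le {α : Type*} [MeasurableSpace α] (μ : Measure α)
    [IsFiniteMeasure μ] {X : α → ℝ} (hX : Measurable X) {g : ℝ → ℝ≥0∞} (hg : Monotone g)
    {A : Set α} (hA : MeasurableSet A) {c : ℝ} (hAc : μ A = μ (X ⁻¹' Iic c)) :
    ∫⁻ v in X ⁻¹' Iic c, g (X v) ∂μ ≤ ∫⁻ v in A, g (X v) ∂μ := by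
  set B := X ⁻¹' Iic c
  have hB : MeasurableSet B := hX measurableSet_Iic
  have hdiff : μ (B \ A) = μ (A \ B) := by
    have hA' := measure_inter_add_sdiff (μ := μ) A hB
    have hB' := measure_inter_add_sdiff (μ := μ) B hA
    rw [hAc, ← hB', inter_comm] at hA'
    exact (ENNReal.add_right_inj (measure_ne_top μ _)).1 hA'.symm
  rw [← lintegral_inter_add_sdiff _ A hB, ← lintegral_inter_add_sdiff _ B hA, inter_comm B A]
  refine add_le_add le_rfl ?_
  calc ∫⁻ v in B \ A, g (X v) ∂μ
      ≤ ∫⁻ _ in B \ A, g c ∂μ := setLIntegral_mono' (hB.diff hA) fun v hv => hg hv.1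
    _ = ∫⁻ _ in A \ B, g c ∂μ := by rw [setLIntegral_const, setLIntegral_const, hdiff]
    _ ≤ ∫⁻ v in A \ B, g (X v) ∂μ :=
        setLIntegral_mono' (hA.diff hB) fun v hv => hg (not_le.1 hv.2).le

end MeasureTheory

namespace ProbabilityTheory

section cdf

variable {μ : Measure ℝ} [IsProbabilityMeasure μ]

lemma continuous_cdf_of_measure_singleton (hμ : ∀ x, μ {x} = 0) : Continuous (cdf μ) := by
  refine continuous_iff_continuousAt.2 fun x => ?_
  have hsingle := (cdf μ).measure_singleton x
  rw [measure_cdf, hμ, eq_comm, ENNReal.ofReal_eq_zero, sub_nonpos] at hsingle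
  rw [(monotone_cdf μ).continuousAt_iff_leftLim_eq_rightLim, (cdf μ).rightLim_eq]
  exact le_antisymm ((monotone_cdf μ).leftLim_le le_rfl) hsingle

lemma strictMono_cdf_of_absolutelyContinuous (hμ : volume ≪ μ) : StrictMono (cdf μ) := by
  intro u w huw
  have hIoc : μ (Ioc u w) ≠ 0 := fun h => by simpa [huw.not_ge] using hμ h
  rwa [← measure_cdf μ, StieltjesFunction.measure_Ioc, ne_eq, ENNReal.ofReal_eq_zero,
    not_le, sub_pos] at hIoc

end cdf

lemma gaussianReal_withDensity_exp (m : ℝ) {v : ℝ≥0} (hv : v ≠ 0) :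
    (gaussianReal 0 v).withDensity (fun y => ENNReal.ofReal (exp ((m * y - m ^ 2 / 2) / v))) =
      gaussianReal m v := by
  rw [gaussianReal_of_var_ne_zero 0 hv, gaussianReal_of_var_ne_zero m hv,
    ← withDensity_mul _ (measurable_gaussianPDF 0 v) (by fun_prop)]
  congr 1 with y
  rw [Pi.mul_apply, gaussianPDF, gaussianPDF, ← ENNReal.ofReal_mul (gaussianPDFReal_nonneg 0 v y),
    gaussianPDFReal, gaussianPDFReal, mul_assoc, ← exp_add]
  congr 3
  field_simp
  ring

lemma stdGaussian_map_inner {E : Type*} [NormedAddCommGroup E] [InnerProductSpace ℝ E]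
    [FiniteDimensional ℝ E] [MeasurableSpace E] [BorelSpace E] (u : E) :
    (stdGaussian E).map (⟪u, ·⟫) = gaussianReal 0 (‖u‖₊ ^ 2) := by
  have := IsGaussian.map_eq_gaussianReal (μ := stdGaussian E) (innerSL ℝ u)
  rwa [integral_strongDual_stdGaussian, variance_dual_stdGaussian, innerSL_apply_norm,
    ← coe_nnnorm, ← NNReal.coe_pow, Real.toNNReal_coe] at this

section CameronMartin

variable {ι : Type*} [Fintype ι]

lemma pi_gaussianReal_map_add (h : ι → ℝ) :
    (Measure.pi fun _ : ι => gaussianReal 0 1).map (· + h) =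
      (Measure.pi fun _ : ι => gaussianReal 0 1).withDensity
        (fun x => ∏ i, ENNReal.ofReal (exp (h i * x i - h i ^ 2 / 2))) := by
  have (i : ι) := SigmaFinite.withDensity_of_ne_top' (μ := gaussianReal 0 1)
    (f := fun y => ENNReal.ofReal (exp (h i * y - h i ^ 2 / 2))) fun _ => ENNReal.ofReal_ne_top
  calc (Measure.pi fun _ : ι => gaussianReal 0 1).map (fun x i => x i + h i)
      = Measure.pi fun i => gaussianReal (h i) 1 := by
        simp_rw [Measure.pi_map_pi (fun _ => measurable_add_const _ |>.aemeasurable),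
          gaussianReal_map_add_const, zero_add]
    _ = Measure.pi fun i => (gaussianReal 0 1).withDensity
          (fun y => ENNReal.ofReal (exp (h i * y - h i ^ 2 / 2))) := by
        congr with i : 1
        simpa using (gaussianReal_withDensity_exp (h i) one_ne_zero).symm
    _ = _ := Measure.pi_withDensity _ fun i => by fun_prop

lemma stdGaussian_map_add (h : EuclideanSpace ℝ ι) :
    (stdGaussian (EuclideanSpace ℝ ι)).map (· + h) =
      (stdGaussian (EuclideanSpace ℝ ι)).withDensity
        (fun v => ENNReal.ofReal (exp (⟪h, v⟫ - ‖h‖ ^ 2 / 2))) := by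
  ext A hA
  rw [← map_pi_eq_stdGaussian, Measure.map_map (by fun_prop) (by fun_prop),
    withDensity_apply _ hA, setLIntegral_map hA (by fun_prop) (by fun_prop),
    show (· + h) ∘ WithLp.toLp 2 = WithLp.toLp 2 ∘ (· + h.ofLp) from rfl,
    ← Measure.map_map (by fun_prop) (by fun_prop), pi_gaussianReal_map_add,
    Measure.map_apply (by fun_prop) hA, withDensity_apply _ (hA.preimage (by fun_prop))]
  refine setLIntegral_congr_fun (hA.preimage (by fun_prop)) fun x _ => ?_
  rw [← ENNReal.ofReal_prod_of_nonneg fun i _ => (exp_pos _).le, ← exp_sum,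
    EuclideanSpace.real_norm_sq_eq, PiLp.inner_apply]
  simp [Finset.sum_sub_distrib, Finset.sum_div, mul_comm]

end CameronMartin

end ProbabilityTheory

lemma Phi_eq_cdf : Phi = cdf (gaussianReal 0 1) := by
  ext x
  rw [cdf_eq_real, measureReal_def, Phi]

lemma Phi_strictMono : StrictMono Phi :=
  Phi_eq_cdf ▸ strictMono_cdf_of_absolutelyContinuous
    (gaussianReal_absolutelyContinuous' 0 one_ne_zero)

lemma Phi_continuous : Continuous Phi :=
  Phi_eq_cdf ▸ continuous_cdf_of_measure_singleton fun _ =>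
    gaussianReal_absolutelyContinuous 0 one_ne_zero Real.volume_singleton

lemma Phi_PhiInv {p : ℝ} (hp0 : 0 < p) (hp1 : p < 1) : Phi (PhiInv p) = p := by
  refine invFun_eq (mem_range_of_exists_le_of_exists_ge Phi_continuous ?_ ?_)
  · rw [Phi_eq_cdf]
    exact ((tendsto_cdf_atBot _).eventually (eventually_le_nhds hp0)).exists
  · rw [Phi_eq_cdf]
    exact ((tendsto_cdf_atTop _).eventually (eventually_ge_nhds hp1)).exists

lemma Phi_le_iff_le_PhiInv {p b : ℝ} (hp0 : 0 < p) (hp1 : p < 1) :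
    Phi b ≤ p ↔ b ≤ PhiInv p := by
  conv_lhs => rw [← Phi_PhiInv hp0 hp1]
  exact Phi_strictMono.le_iff_le

lemma Phi_sub_eq_gaussianReal_Iic (a m : ℝ) : Phi (a - m) = (gaussianReal m 1).real (Iic a) := by
  rw [← zero_add m, ← gaussianReal_map_add_const,
    map_measureReal_apply (by fun_prop) measurableSet_Iic, Phi, measureReal_def]
  congr 2
  ext y
  simp [le_sub_iff_add_le]

section GaussianShift

variable {ι : Type*} [Fintype ι]

lemma Phi_sub_norm_le_stdGaussian_preimage_add {A : Set (EuclideanSpace ℝ ι)}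
    (hA : MeasurableSet A) {a : ℝ} (hAa : (stdGaussian (EuclideanSpace ℝ ι)).real A = Phi a)
    (h : EuclideanSpace ℝ ι) :
    Phi (a - ‖h‖) ≤ (stdGaussian (EuclideanSpace ℝ ι)).real ((· + h) ⁻¹' A) := by
  set γ := stdGaussian (EuclideanSpace ℝ ι)
  rcases eq_or_ne h 0 with rfl | hh
  · simp [hAa]
  set r := ‖h‖
  set Y : EuclideanSpace ℝ ι → ℝ := (⟪r⁻¹ • h, ·⟫)
  set g : ℝ → ℝ≥0∞ := fun y => ENNReal.ofReal (exp (r * y - r ^ 2 / 2))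
  have hg : Monotone g := fun y z hyz => by
    simp only [g]
    gcongr
  have hY : γ.map Y = gaussianReal 0 1 := by
    rw [stdGaussian_map_inner]
    congr
    ext
    simp [norm_smul, r, hh]
  have hlevel : γ A = γ (Y ⁻¹' Iic a) := by
    rw [← Measure.map_apply (by fun_prop) measurableSet_Iic, hY]
    exact (ENNReal.toReal_eq_toReal_iff' (measure_ne_top _ _) (measure_ne_top _ _)).1 hAa
  have hshift : γ ((· + h) ⁻¹' A) = ∫⁻ v in A, g (Y v) ∂γ := by
    rw [← Measure.map_apply (by fun_prop) hA, stdGaussian_map_add, withDensity_apply _ hA]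
    congr with v
    simp [g, Y, inner_smul_left, r, hh]
  have hhalf : ∫⁻ v in Y ⁻¹' Iic a, g (Y v) ∂γ = gaussianReal r 1 (Iic a) := by
    have htilt := gaussianReal_withDensity_exp r one_ne_zero
    simp only [NNReal.coe_one, div_one] at htilt
    rw [← setLIntegral_map measurableSet_Iic (by fun_prop) (by fun_prop), hY,
      ← withDensity_apply _ measurableSet_Iic, htilt]
  rw [Phi_sub_eq_gaussianReal_Iic, measureReal_def, measureReal_def, ← hhalf, hshift]
  exact ENNReal.toReal_mono (hshift ▸ measure_ne_top _ _)
    (setLIntegral_preimage_Iic_le γ (by fun_prop) hg hA hlevel)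

lemma PhiInv_sub_PhiInv_map_smul_le {σ : ℝ} (hσ : 0 < σ) {A : Set (EuclideanSpace ℝ ι)}
    (hA : MeasurableSet A) (h : EuclideanSpace ℝ ι)
    (hp : 0 < ((stdGaussian _).map (σ • ·)).real A ∧ ((stdGaussian _).map (σ • ·)).real A < 1)
    (hq : 0 < ((stdGaussian _).map (σ • ·)).real ((· + h) ⁻¹' A) ∧
      ((stdGaussian _).map (σ • ·)).real ((· + h) ⁻¹' A) < 1) :
    σ * PhiInv (((stdGaussian _).map (σ • ·)).real A) -
      σ * PhiInv (((stdGaussian _).map (σ • ·)).real ((· + h) ⁻¹' A)) ≤ ‖h‖ := by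
  have hpre : (σ • ·) ⁻¹' ((· + h) ⁻¹' A) = (· + σ⁻¹ • h) ⁻¹' ((σ • ·) ⁻¹' A) := by
    ext w
    simp [smul_add, smul_inv_smul₀ hσ.ne']
  have hνA := map_measureReal_apply (μ := stdGaussian (EuclideanSpace ℝ ι))
    (measurable_const_smul σ) hA
  have hνhA := map_measureReal_apply (μ := stdGaussian (EuclideanSpace ℝ ι))
    (measurable_const_smul σ) (hA.preimage (measurable_add_const h))
  have hcore := Phi_sub_norm_le_stdGaussian_preimage_add (hA.preimage (measurable_const_smul σ))
    (hνA ▸ (Phi_PhiInv hp.1 hp.2).symm) (σ⁻¹ • h)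
  rw [← hpre, ← hνhA, ← hνA, Phi_le_iff_le_PhiInv hq.1 hq.2, norm_smul, norm_inv,
    Real.norm_of_nonneg hσ.le, inv_mul_eq_div] at hcore
  rw [← mul_sub, ← le_div_iff₀' hσ]
  linarith

end GaussianShift

lemma gaussPi_eq_map_smul (d : ℕ) {σ : ℝ} (hσ : 0 ≤ σ) :
    gaussPi d σ = (stdGaussian (EuclideanSpace ℝ (Fin d))).map (σ • ·) := by
  have hvar : gaussianReal 0 (σ.toNNReal ^ 2) = (gaussianReal 0 1).map (σ * ·) := by
    rw [gaussianReal_map_const_mul, mul_zero]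
    congr
    ext
    simp [hσ]
  rw [gaussPi, hvar, ← Measure.pi_map_pi fun _ => by fun_prop, ← map_pi_eq_stdGaussian,
    Measure.map_map (by fun_prop) (by fun_prop), Measure.map_map (by fun_prop) (by fun_prop)]
  rfl

theorem indicator_smoothing_lipschitz_general (d : ℕ) (σ : ℝ) (hσ : 0 < σ)
    (f : EuclideanSpace ℝ (Fin d) → ℝ) (hf : Measurable f) (t : ℝ)
    (hprob : ∀ x : EuclideanSpace ℝ (Fin d),
      0 < ((gaussPi d σ) {v | f (x + v) ≤ t}).toReal ∧
        ((gaussPi d σ) {v | f (x + v) ≤ t}).toReal < 1) :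
    ∀ x x' : EuclideanSpace ℝ (Fin d),
      |σ * PhiInv (((gaussPi d σ) {v | f (x + v) ≤ t}).toReal) -
        σ * PhiInv (((gaussPi d σ) {v | f (x' + v) ≤ t}).toReal)| ≤ ‖x - x'‖ := by
  have key (x x' : EuclideanSpace ℝ (Fin d)) :
      σ * PhiInv (((gaussPi d σ) {v | f (x + v) ≤ t}).toReal) -
        σ * PhiInv (((gaussPi d σ) {v | f (x' + v) ≤ t}).toReal) ≤ ‖x - x'‖ := by
    have hshift : {v | f (x' + v) ≤ t} = (· + (x' - x)) ⁻¹' {v | f (x + v) ≤ t} := by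
      ext v
      simp only [mem_preimage, mem_ofPred_eq, show x + (v + (x' - x)) = x' + v by abel]
    have hx := hprob x
    have hx' := hprob x'
    rw [hshift] at hx' ⊢
    rw [← norm_neg, neg_sub]
    simp only [gaussPi_eq_map_smul d hσ.le, ← measureReal_def] at hx hx' ⊢
    exact PhiInv_sub_PhiInv_map_smul_le hσ
      (measurableSet_le (hf.comp (measurable_const_add x)) measurable_const) _ hx hx'
  intro x x'
  exact abs_sub_le_iff.2 ⟨key x x', norm_sub_rev x x' ▸ key x' x⟩

/-- For measurable `f : ℝ^d → ℝ` and `t ∈ ℝ` with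
`0 < P[f(x+G) ≤ t] < 1` for every `x`, the map `x ↦ σ·Φ⁻¹(P[f(x+G) ≤ t])`
is 1-Lipschitz with respect to the Euclidean norm. -/
theorem indicator_smoothing_lipschitz (d : ℕ) (hd : 1 ≤ d) (σ : ℝ) (hσ : 0 < σ)
    (f : EuclideanSpace ℝ (Fin d) → ℝ) (hf : Measurable f) (t : ℝ)
    (hprob : ∀ x : EuclideanSpace ℝ (Fin d),
      0 < ((gaussPi d σ) {v | f (x + v) ≤ t}).toReal ∧
        ((gaussPi d σ) {v | f (x + v) ≤ t}).toReal < 1) :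
    ∀ x x' : EuclideanSpace ℝ (Fin d),
      |σ * PhiInv (((gaussPi d σ) {v | f (x + v) ≤ t}).toReal) -
        σ * PhiInv (((gaussPi d σ) {v | f (x' + v) ≤ t}).toReal)| ≤ ‖x - x'‖ :=
  indicator_smoothing_lipschitz_general d σ hσ f hf t hprob
end

section
/- Let n ≥ 1 and let X₁, …, Xₙ be independent, identically distributed real-valued random variables. Let t ∈ ℝ, set p = P(X₁ ≤ t), and let 1 ≤ q ≤ n. Then P(#{i : Xᵢ < t} ≤ q − 1) ≥ Σ_{i=0}^{q−1} C(n,i)·pⁱ·(1−p)^{n−i}. Equivalently, the q-th order statistic K_q of the sample satisfies P(K_q ≥ t) ≥ Σ_{i=0}^{q−1} C(n,i)·pⁱ·(1−p)^{n−i}, since the event {K_q ≥ t} is exactly the event that fewer than q of the samples are strictly less than t. -/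
/-!
The events `{Xᵢ ≤ t}` are independent with common probability `p`, so the random index set
`{i | Xᵢ ≤ t}` equals a given `S` with probability `p ^ #S * (1 - p) ^ (n - #S)`; summing over
all `S` with `#S ≤ q - 1` gives exactly the binomial sum. Since `Xᵢ < t` implies `Xᵢ ≤ t`,
the event `#{i | Xᵢ ≤ t} ≤ q - 1` is contained in `#{i | Xᵢ < t} ≤ q - 1`.
-/

open MeasureTheory ProbabilityTheory Finset

namespace Finset

theorem sum_powerset_filter_card_le {α β : Type*} [AddCommMonoid α] (f : ℕ → α)
    (x : Finset β) (m : ℕ) :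
    ∑ s ∈ x.powerset with #s ≤ m, f #s = ∑ k ∈ range (m + 1), (#x).choose k • f k := by
  rw [← sum_fiberwise_of_maps_to (g := card) (t := range (m + 1))
    (fun s hs ↦ mem_range_succ_iff.2 (mem_filter.1 hs).2)]
  refine sum_congr rfl fun k hk ↦ ?_
  have hkm := mem_range_succ_iff.1 hk
  have hfiber : {s ∈ {s ∈ x.powerset | #s ≤ m} | #s = k} = powersetCard k x := by
    rw [filter_filter, powersetCard_eq_filter]
    exact filter_congr fun s _ ↦ ⟨And.right, fun h ↦ ⟨h ▸ hkm, h⟩⟩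
  rw [hfiber, ← card_powersetCard, ← sum_const]
  exact sum_congr rfl fun s hs ↦ by rw [(mem_powersetCard.1 hs).2]

end Finset

lemma ProbabilityTheory.iIndepFun.iIndepSet_preimage {Ω ι : Type*} [MeasurableSpace Ω]
    {μ : Measure Ω} {β : ι → Type*} {m : ∀ i, MeasurableSpace (β i)} {f : ∀ i, Ω → β i}
    (hf : iIndepFun f μ) {s : ∀ i, Set (β i)} (hs : ∀ i, MeasurableSet (s i)) :
    iIndepSet (fun i ↦ f i ⁻¹' s i) μ :=
  (iIndepSet_iff_iIndep _ _).2 <| iIndep_of_iIndep_of_le ((iIndepFun_iff_iIndep _ _ _).1 hf)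
    fun i ↦ MeasurableSpace.generateFrom_le <| by rintro _ rfl; exact ⟨s i, hs i, rfl⟩

section CountingEvents

open scoped Classical

theorem Set.setOf_filter_mem_eq {Ω ι : Type*} [Fintype ι] (B : ι → Set Ω) (S : Finset ι) :
    {ω | ({i | ω ∈ B i} : Finset ι) = S} = ⋂ i, if i ∈ S then B i else (B i)ᶜ := by
  ext ω
  simp only [Set.mem_ofPred_eq, Set.mem_iInter, Finset.ext_iff, mem_filter]
  refine forall_congr' fun i ↦ ?_
  split_ifs with h <;> simp [h]

namespace ProbabilityTheory.iIndepSet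

variable {Ω ι : Type*} [MeasurableSpace Ω] {μ : Measure Ω} [IsProbabilityMeasure μ] [Fintype ι]
  {B : ι → Set Ω} {p : ℝ}

lemma measureReal_filter_mem_eq (hB : iIndepSet B μ) (hBm : ∀ i, MeasurableSet (B i))
    (hp : ∀ i, μ.real (B i) = p) (S : Finset ι) :
    μ.real {ω | ({i | ω ∈ B i} : Finset ι) = S} =
      p ^ #S * (1 - p) ^ (Fintype.card ι - #S) := by
  have hgen : ∀ i, MeasurableSet[MeasurableSpace.generateFrom {B i}]
      (if i ∈ S then B i else (B i)ᶜ) := fun i ↦ by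
    have := MeasurableSpace.measurableSet_generateFrom (Set.mem_singleton (B i))
    split_ifs
    exacts [this, this.compl]
  rw [Set.setOf_filter_mem_eq, measureReal_def,
    ((iIndepSet_iff_iIndep _ _).1 hB).meas_iInter hgen, ENNReal.toReal_prod]
  simp_rw [← measureReal_def, apply_ite μ.real, probReal_compl_eq_one_sub (hBm _), hp]
  rw [prod_ite, prod_const, prod_const, filter_mem_eq_inter, univ_inter, filter_not,
    card_sdiff, filter_mem_eq_inter, univ_inter, inter_univ, card_univ]

lemma measureReal_card_filter_mem_le (hB : iIndepSet B μ) (hBm : ∀ i, MeasurableSet (B i))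
    (hp : ∀ i, μ.real (B i) = p) (m : ℕ) :
    μ.real {ω | #{i | ω ∈ B i} ≤ m} =
      ∑ k ∈ range (m + 1), (Fintype.card ι).choose k * p ^ k * (1 - p) ^ (Fintype.card ι - k) := by
  have hcount : {ω | #{i | ω ∈ B i} ≤ m} = (fun ω ↦ ({i | ω ∈ B i} : Finset ι)) ⁻¹'
      (({S ∈ univ.powerset | #S ≤ m} : Finset (Finset ι)) : Set (Finset ι)) := by
    ext ω; simp
  rw [hcount, ← sum_measureReal_preimage_singleton]
  · simp_rw [Set.preimage, Set.mem_singleton_iff, measureReal_filter_mem_eq hB hBm hp,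
      sum_powerset_filter_card_le (fun k ↦ p ^ k * (1 - p) ^ (Fintype.card ι - k)), card_univ,
      nsmul_eq_mul, mul_assoc]
  · intro S _
    simp_rw [Set.preimage, Set.mem_singleton_iff, Set.setOf_filter_mem_eq]
    refine MeasurableSet.iInter fun i ↦ ?_
    split_ifs
    exacts [hBm i, (hBm i).compl]

end ProbabilityTheory.iIndepSet

end CountingEvents

open scoped Classical in
theorem order_statistic_binomial_bound_general {Ω : Type*} [MeasureSpace Ω]
    [IsProbabilityMeasure (ℙ : Measure Ω)]
    (n : ℕ) (hn : 1 ≤ n) (X : Fin n → Ω → ℝ) (hX : ∀ i, Measurable (X i))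
    (hindep : iIndepFun X ℙ)
    (hident : ∀ i j, IdentDistrib (X i) (X j) ℙ ℙ)
    (t : ℝ) (q : ℕ) (hq1 : 1 ≤ q)
    (p : ℝ) (hp : p = (ℙ {ω | X ⟨0, hn⟩ ω ≤ t}).toReal) :
    ∑ i ∈ Finset.range q, (n.choose i : ℝ) * p ^ i * (1 - p) ^ (n - i) ≤
      (ℙ {ω | (Finset.univ.filter fun i => X i ω < t).card ≤ q - 1}).toReal := by
  have hB : iIndepSet (fun i ↦ X i ⁻¹' Set.Iic t) ℙ :=
    hindep.iIndepSet_preimage fun _ ↦ measurableSet_Iic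
  have hpB : ∀ i, (ℙ : Measure Ω).real (X i ⁻¹' Set.Iic t) = p := fun i ↦ by
    rw [hp, measureReal_def, (hident i _).measure_mem_eq measurableSet_Iic]; rfl
  obtain ⟨m, rfl⟩ : ∃ m, q = m + 1 := ⟨q - 1, by omega⟩
  calc ∑ i ∈ range (m + 1), (n.choose i : ℝ) * p ^ i * (1 - p) ^ (n - i)
      = (ℙ : Measure Ω).real {ω | #{i | X i ω ≤ t} ≤ m} := by
        simpa only [Set.mem_preimage, Set.mem_Iic, Fintype.card_fin] using
          (hB.measureReal_card_filter_mem_le (fun i ↦ hX i measurableSet_Iic) hpB m).symm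
    _ ≤ (ℙ : Measure Ω).real {ω | #{i | X i ω < t} ≤ m} :=
        measureReal_mono fun ω hω ↦
          (card_le_card (monotone_filter_right _ fun _ _ ↦ le_of_lt)).trans hω

open scoped Classical in
/-- For `n ≥ 1` i.i.d. real random variables `X₁, …, Xₙ`, `t ∈ ℝ`,
`p = P(X₁ ≤ t)`, and `1 ≤ q ≤ n`, we have
`P(#{i : Xᵢ < t} ≤ q − 1) ≥ Σ_{i=0}^{q−1} C(n,i)·pⁱ·(1−p)^{n−i}`
(the event `{K_q ≥ t}` for the `q`-th order statistic `K_q` is exactly the event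
that fewer than `q` samples are strictly less than `t`). -/
theorem order_statistic_binomial_bound {Ω : Type*} [MeasureSpace Ω]
    [IsProbabilityMeasure (ℙ : Measure Ω)]
    (n : ℕ) (hn : 1 ≤ n) (X : Fin n → Ω → ℝ) (hX : ∀ i, Measurable (X i))
    (hindep : iIndepFun X ℙ)
    (hident : ∀ i j, IdentDistrib (X i) (X j) ℙ ℙ)
    (t : ℝ) (q : ℕ) (hq1 : 1 ≤ q) (hqn : q ≤ n)
    (p : ℝ) (hp : p = (ℙ {ω | X ⟨0, hn⟩ ω ≤ t}).toReal) :
    ∑ i ∈ Finset.range q, (n.choose i : ℝ) * p ^ i * (1 - p) ^ (n - i) ≤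
      (ℙ {ω | (Finset.univ.filter fun i => X i ω < t).card ≤ q - 1}).toReal :=
  order_statistic_binomial_bound_general n hn X hX hindep hident t q hq1 p hp
end

section
/- Fix a ground-truth box B* = B(a₁,b₁,a₂,b₂) with a₁ < a₂ and b₁ < b₂. Fix x₁, y₁, y₂ ∈ ℝ with y₁ < y₂, and fix an interval [c, C] with x₁ < c ≤ C. Then the minimum over x₂ ∈ [c, C] of IoU(B(x₁,y₁,x₂,y₂), B*) is attained at an endpoint: min_{x₂ ∈ [c,C]} IoU(B(x₁,y₁,x₂,y₂), B*) = min(IoU(B(x₁,y₁,c,y₂), B*), IoU(B(x₁,y₁,C,y₂), B*)). -/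
/-!
Moving the right edge `x₂` of the box towards `a₂` enlarges the intersection with `B*` fast
enough that the IoU does not decrease, while beyond `a₂` the intersection stays fixed and only
the union grows. So the IoU is unimodal in `x₂` and its minimum over `[c, C]` sits at an endpoint.
-/

open MeasureTheory

/-- The axis-aligned box `[x₁,x₂] × [y₁,y₂] ⊆ ℝ²`. -/
def box (x₁ y₁ x₂ y₂ : ℝ) : Set (ℝ × ℝ) := Set.Icc x₁ x₂ ×ˢ Set.Icc y₁ y₂

/-- Intersection over union of two boxes: `vol(B ∩ B′)/vol(B ∪ B′)`, where `vol` is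
two-dimensional Lebesgue measure. -/
noncomputable def iou (B B' : Set (ℝ × ℝ)) : ℝ :=
  (volume (B ∩ B')).toReal / (volume (B ∪ B')).toReal

open Set

section Unimodal

variable {α β : Type*} [LinearOrder α] {f : α → β}

theorem min_le_of_monotoneOn_of_antitoneOn [LinearOrder β] {a b m x : α}
    (hmono : MonotoneOn f (Icc a m)) (hanti : AntitoneOn f (Icc m b)) (hx : x ∈ Icc a b) :
    min (f a) (f b) ≤ f x := by
  rcases le_total x m with hxm | hmx
  · exact min_le_of_left_le <| hmono ⟨le_rfl, hx.1.trans hxm⟩ ⟨hx.1, hxm⟩ hx.1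
  · exact min_le_of_right_le <| hanti ⟨hmx, hx.2⟩ ⟨hmx.trans hx.2, le_rfl⟩ hx.2

theorem csInf_image_Icc_eq_min [ConditionallyCompleteLinearOrder β] {a b : α} (hab : a ≤ b)
    (h : ∀ x ∈ Icc a b, min (f a) (f b) ≤ f x) :
    sInf (f '' Icc a b) = min (f a) (f b) := by
  refine IsLeast.csInf_eq ⟨?_, forall_mem_image.2 h⟩
  rcases min_choice (f a) (f b) with hmin | hmin <;> rw [hmin]
  exacts [mem_image_of_mem f (left_mem_Icc.2 hab), mem_image_of_mem f (right_mem_Icc.2 hab)]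

end Unimodal

section Overlap

variable {x₀ m k h A : ℝ}

theorem overlap_denom_pos (hm : x₀ ≤ m) (hk : 0 ≤ k) (hkh : k ≤ h) (hA : 0 < A) {x : ℝ}
    (hx : x₀ ≤ x) : 0 < (x - x₀) * h + A - max (x - m) 0 * k := by
  have hw : max (x - m) 0 ≤ x - x₀ := max_le (by linarith) (by linarith)
  nlinarith [mul_le_mul hw hkh hk (by linarith : (0 : ℝ) ≤ x - x₀)]

/-- The IoU of `[x₀, x] × I` with a box whose `x`-range starts at `m` and whose overlap with `I`
has length `k`, as a function of `x`; here `h = |I|` and `A` is the area of the second box. -/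
theorem monotoneOn_overlap_ratio (hm : x₀ ≤ m) (hk : 0 ≤ k) (hkh : k ≤ h) (hA : 0 < A) :
    MonotoneOn (fun x => max (x - m) 0 * k / ((x - x₀) * h + A - max (x - m) 0 * k))
      (Ici x₀) := by
  intro x hx y hy hxy
  have hDx := overlap_denom_pos hm hk hkh hA hx
  have hDy := overlap_denom_pos hm hk hkh hA hy
  rcases le_total x m with hxm | hmx
  · simp only [max_eq_right (sub_nonpos.2 hxm), zero_mul, zero_div]
    exact div_nonneg (mul_nonneg (le_max_right _ _) hk) hDy.le
  · simp only [max_eq_left (sub_nonneg.2 hmx), max_eq_left (sub_nonneg.2 (hmx.trans hxy))]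
      at hDx hDy ⊢
    rw [div_le_div_iff₀ hDx hDy]
    -- the `k²` terms cancel, leaving `k (y - x) ((m - x₀) h + A) ≥ 0`
    nlinarith [mul_nonneg (mul_nonneg hk (sub_nonneg.2 hxy)) (sub_nonneg.2 hm),
      mul_nonneg hk (sub_nonneg.2 hxy), (hk.trans hkh : 0 ≤ h)]

end Overlap

section Box

theorem isCompact_box (x₁ y₁ x₂ y₂ : ℝ) : IsCompact (box x₁ y₁ x₂ y₂) :=
  isCompact_Icc.prod isCompact_Icc

theorem measurableSet_box (x₁ y₁ x₂ y₂ : ℝ) : MeasurableSet (box x₁ y₁ x₂ y₂) :=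
  measurableSet_Icc.prod measurableSet_Icc

theorem volume_real_box (x₁ y₁ x₂ y₂ : ℝ) :
    volume.real (box x₁ y₁ x₂ y₂) = max (x₂ - x₁) 0 * max (y₂ - y₁) 0 := by
  rw [box, Measure.volume_eq_prod, measureReal_prod_prod, Real.volume_real_Icc,
    Real.volume_real_Icc]

theorem box_inter_box (x₁ y₁ x₂ y₂ a₁ b₁ a₂ b₂ : ℝ) :
    box x₁ y₁ x₂ y₂ ∩ box a₁ b₁ a₂ b₂ =
      box (max x₁ a₁) (max y₁ b₁) (min x₂ a₂) (min y₂ b₂) := by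
  simp only [box, prod_inter_prod, Icc_inter_Icc]

end Box

section IoU

theorem iou_eq_div_sub {B S : Set (ℝ × ℝ)} (hS : MeasurableSet S) (hB : volume B ≠ ⊤)
    (hS' : volume S ≠ ⊤) :
    iou B S = volume.real (B ∩ S) / (volume.real B + volume.real S - volume.real (B ∩ S)) := by
  rw [iou, ← measureReal_def, ← measureReal_def, ← measureReal_union_add_inter hS hB hS',
    add_sub_cancel_right]

theorem iou_le_iou_of_subset_of_inter_eq {B B' S : Set (ℝ × ℝ)} (hBB' : B ⊆ B')
    (hinter : B' ∩ S = B ∩ S) (hfin : volume (B' ∪ S) ≠ ⊤) : iou B' S ≤ iou B S := by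
  have hU : volume.real (B ∪ S) ≤ volume.real (B' ∪ S) :=
    measureReal_mono (union_subset_union_left S hBB') hfin
  have hfin' : volume (B ∪ S) ≠ ⊤ :=
    ne_top_of_le_ne_top hfin (measure_mono (union_subset_union_left S hBB'))
  rw [iou, iou, ← measureReal_def, ← measureReal_def, ← measureReal_def, hinter]
  rcases (measureReal_nonneg : 0 ≤ volume.real (B ∪ S)).eq_or_lt with hU0 | hUpos
  · have hI : volume.real (B ∩ S) = 0 :=
      le_antisymm (hU0 ▸ measureReal_mono (inter_subset_left.trans subset_union_left) hfin')
        measureReal_nonneg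
    simp [hI]
  · exact div_le_div_of_nonneg_left measureReal_nonneg hUpos hU

theorem iou_box_eq {a₁ b₁ a₂ b₂ x₁ y₁ x₂ y₂ : ℝ} (hx : x₁ ≤ x₂) (hy : y₁ ≤ y₂)
    (ha : a₁ ≤ a₂) (hb : b₁ ≤ b₂) :
    iou (box x₁ y₁ x₂ y₂) (box a₁ b₁ a₂ b₂) =
      max (min x₂ a₂ - max x₁ a₁) 0 * max (min y₂ b₂ - max y₁ b₁) 0 /
        ((x₂ - x₁) * (y₂ - y₁) + (a₂ - a₁) * (b₂ - b₁)
          - max (min x₂ a₂ - max x₁ a₁) 0 * max (min y₂ b₂ - max y₁ b₁) 0) := by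
  rw [iou_eq_div_sub (measurableSet_box ..) ((isCompact_box ..).measure_ne_top)
      ((isCompact_box ..).measure_ne_top), box_inter_box, volume_real_box, volume_real_box,
    volume_real_box, max_eq_left (sub_nonneg.2 hx), max_eq_left (sub_nonneg.2 hy),
    max_eq_left (sub_nonneg.2 ha), max_eq_left (sub_nonneg.2 hb)]

variable {a₁ b₁ a₂ b₂ x₁ y₁ y₂ : ℝ}

theorem monotoneOn_iou_box_right (ha : a₁ < a₂) (hb : b₁ < b₂) (hy : y₁ ≤ y₂) :
    MonotoneOn (fun x₂ => iou (box x₁ y₁ x₂ y₂) (box a₁ b₁ a₂ b₂)) (Icc x₁ a₂) := by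
  have hk : max (min y₂ b₂ - max y₁ b₁) 0 ≤ y₂ - y₁ :=
    max_le (by linarith [min_le_left y₂ b₂, le_max_left y₁ b₁]) (sub_nonneg.2 hy)
  refine ((monotoneOn_overlap_ratio (le_max_left x₁ a₁) (le_max_right _ _) hk
    (mul_pos (sub_pos.2 ha) (sub_pos.2 hb))).mono Icc_subset_Ici_self).congr fun x hx => ?_
  simp only [iou_box_eq hx.1 hy ha.le hb.le, min_eq_left hx.2]

theorem antitoneOn_iou_box_right :
    AntitoneOn (fun x₂ => iou (box x₁ y₁ x₂ y₂) (box a₁ b₁ a₂ b₂)) (Ici a₂) := by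
  intro x (hx : a₂ ≤ x) y _ hxy
  refine iou_le_iou_of_subset_of_inter_eq
    (prod_mono (Icc_subset_Icc_right hxy) subset_rfl) ?_
    (measure_union_ne_top ((isCompact_box ..).measure_ne_top) ((isCompact_box ..).measure_ne_top))
  rw [box_inter_box, box_inter_box, min_eq_right (le_trans hx hxy), min_eq_right hx]

end IoU

/-- Fixing a nondegenerate ground-truth box `B* = B(a₁,b₁,a₂,b₂)`,
coordinates `x₁`, `y₁ < y₂`, and an interval `[c, C]` with `x₁ < c ≤ C`, the minimum
over `x₂ ∈ [c, C]` of `IoU(B(x₁,y₁,x₂,y₂), B*)` is attained at an endpoint: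
it equals `min(IoU(B(x₁,y₁,c,y₂), B*), IoU(B(x₁,y₁,C,y₂), B*))`. -/
theorem iou_min_at_endpoint (a₁ b₁ a₂ b₂ : ℝ) (ha : a₁ < a₂) (hb : b₁ < b₂)
    (x₁ y₁ y₂ c C : ℝ) (hy : y₁ < y₂) (hc : x₁ < c) (hcC : c ≤ C) :
    sInf ((fun x₂ => iou (box x₁ y₁ x₂ y₂) (box a₁ b₁ a₂ b₂)) '' Set.Icc c C) =
      min (iou (box x₁ y₁ c y₂) (box a₁ b₁ a₂ b₂))
        (iou (box x₁ y₁ C y₂) (box a₁ b₁ a₂ b₂)) := by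
  refine csInf_image_Icc_eq_min hcC fun x hx =>
    min_le_of_monotoneOn_of_antitoneOn
      (f := fun x₂ => iou (box x₁ y₁ x₂ y₂) (box a₁ b₁ a₂ b₂)) (m := a₂) ?_ ?_ hx
  · exact (monotoneOn_iou_box_right ha hb hy.le).mono (Icc_subset_Icc_left hc.le)
  · exact antitoneOn_iou_box_right.mono Icc_subset_Ici_self
end
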